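/- arXiv:1904.02550 — 2 statements merged into one kernel-verified Lean document; each statement's English description precedes it below -/
import Mathlib

section
/- Let r be a positive integer and p a prime with p > 2r+1. Then sum_{k=0}^{p-1} k^r·(k+1)^r·H_k^{(2)} ≡ 0 (mod p). -/
/-- `harmonic' k m` is the `k`-th harmonic number of order `m`: `∑_{i=1}^k 1/i^m`. -/
def harmonic' (k m : ℕ) : ℚ := ∑ i ∈ Finset.Icc 1 k, 1 / (i : ℚ) ^ m

/-!
The terms of the sum are `p`-integral, so it suffices to show that its reduction vanishes in
`𝔽_p`. There the substitution `k ↦ p - 1 - k` fixes `k^r (k+1)^r` and sends `H_k` to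
`H_{p-1-k} = H_{p-1} - H_k`, because `j ↦ p - j` preserves `1/j^2`. Moreover
`H_{p-1} = ∑_{x ∈ 𝔽_p} x⁻² = ∑_{x ∈ 𝔽_p} x² = 0` as `2 < p - 1`. Hence the sum equals its own
negative, and `p` is odd.
-/

open Finset

namespace ZMod

def harmonic (p k m : ℕ) : ZMod p := ∑ i ∈ Icc 1 k, (i : ZMod p)⁻¹ ^ m

theorem sum_univ_eq_sum_range {M : Type*} [AddCommMonoid M] (n : ℕ) [NeZero n]
    (f : ZMod n → M) : ∑ x, f x = ∑ i ∈ range n, f i := by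
  refine sum_nbij' val (fun i : ℕ => (i : ZMod n)) ?_ ?_ ?_ ?_ ?_ <;>
    intro a ha <;> simp_all [val_lt, Nat.mod_eq_of_lt]

theorem pow_mul_add_one_pow_reflect {p : ℕ} (r : ℕ) {k : ℕ} (hk : k < p) :
    ((p - 1 - k : ℕ) : ZMod p) ^ r * (((p - 1 - k : ℕ) : ZMod p) + 1) ^ r
      = (k : ZMod p) ^ r * ((k : ZMod p) + 1) ^ r := by
  have hcast : ((p - 1 - k : ℕ) : ZMod p) = -((k : ZMod p) + 1) := by
    rw [Nat.sub_sub, Nat.cast_sub (by omega), natCast_self]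
    push_cast
    ring
  rw [hcast, ← mul_pow, ← mul_pow]
  ring

variable {p : ℕ} [Fact p.Prime]

theorem sum_inv_pow_eq_zero {m : ℕ} (hm : m < p - 1) : ∑ x : ZMod p, x⁻¹ ^ m = 0 := by
  rw [← Equiv.sum_comp (Equiv.inv (ZMod p)) (fun x => x⁻¹ ^ m)]
  simp only [Equiv.inv_apply, inv_inv]
  exact FiniteField.sum_pow_lt_card_sub_one _ m (by rwa [card])

theorem harmonic_pred_eq_zero {m : ℕ} (hm0 : m ≠ 0) (hm : m < p - 1) :
    harmonic p (p - 1) m = 0 := by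
  have hp := (Fact.out : p.Prime).pos
  rw [harmonic, ← sum_inv_pow_eq_zero hm, sum_univ_eq_sum_range, range_eq_Ico,
    sum_eq_sum_Ico_succ_bot hp, ← Ico_add_one_right_eq_Icc, show p - 1 + 1 = p by omega]
  simp [hm0]

theorem harmonic_sub_add_harmonic {m : ℕ} (hm : Even m) {k : ℕ} (hk : k < p) :
    harmonic p (p - 1 - k) m + harmonic p k m = harmonic p (p - 1) m := by
  have hreflect : harmonic p k m = ∑ j ∈ Ico (p - k) p, (j : ZMod p)⁻¹ ^ m := by
    have h := sum_Ico_reflect (fun j => (j : ZMod p)⁻¹ ^ m) 1 (m := k + 1) (n := p) (by omega)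
    rw [show p + 1 - (k + 1) = p - k by omega, Nat.add_sub_cancel] at h
    rw [harmonic, ← Ico_add_one_right_eq_Icc, ← h]
    refine sum_congr rfl fun j hj => ?_
    rw [Nat.cast_sub (by simp at hj; omega), natCast_self, zero_sub, inv_neg, hm.neg_pow]
  rw [hreflect, harmonic, harmonic, ← Ico_add_one_right_eq_Icc, ← Ico_add_one_right_eq_Icc,
    show p - 1 - k + 1 = p - k by omega, show p - 1 + 1 = p by omega,
    sum_Ico_consecutive _ (by omega) (by omega)]

theorem sum_mul_harmonic_eq_zero (A : ℕ → ZMod p) (hA : ∀ k < p, A (p - 1 - k) = A k)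
    {m : ℕ} (hm : Even m) (hm0 : m ≠ 0) (hmp : m < p - 1) :
    ∑ k ∈ range p, A k * harmonic p k m = 0 := by
  have hanti : ∀ k < p, harmonic p (p - 1 - k) m = -harmonic p k m := fun k hk =>
    eq_neg_of_add_eq_zero_left <|
      (harmonic_sub_add_harmonic hm hk).trans (harmonic_pred_eq_zero hm0 hmp)
  have hchar : ringChar (ZMod p) ≠ 2 := by
    rw [ringChar_zmod_n]
    obtain ⟨m, rfl⟩ := hm
    omega
  rw [← Ring.eq_self_iff_eq_zero_of_char_ne_two hchar]
  calc -∑ k ∈ range p, A k * harmonic p k m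
      = ∑ k ∈ range p, A (p - 1 - k) * harmonic p (p - 1 - k) m := by
        rw [← sum_neg_distrib]
        refine sum_congr rfl fun k hk => ?_
        rw [mem_range] at hk
        rw [hA k hk, hanti k hk, mul_neg]
    _ = ∑ k ∈ range p, A k * harmonic p k m :=
        sum_range_reflect (fun k => A k * harmonic p k m) p

end ZMod

namespace PadicInt

noncomputable def harmonic (p k m : ℕ) [Fact p.Prime] : ℤ_[p] :=
  ∑ i ∈ Icc 1 k, (i : ℤ_[p]).inv ^ m

variable {p : ℕ} [Fact p.Prime]

theorem coe_inv_of_norm_eq_one {z : ℤ_[p]} (hz : ‖z‖ = 1) :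
    ((z.inv : ℤ_[p]) : ℚ_[p]) = (z : ℚ_[p])⁻¹ := by
  rw [norm_def] at hz
  obtain ⟨z, hz'⟩ := z
  simp [PadicInt.inv, hz]

theorem toZMod_inv_of_norm_eq_one {z : ℤ_[p]} (hz : ‖z‖ = 1) :
    toZMod z.inv = (toZMod z)⁻¹ :=
  eq_inv_of_mul_eq_one_left (by rw [← map_mul, inv_mul hz, map_one])

theorem norm_le_inv_of_toZMod_eq_zero {x : ℤ_[p]} (hx : toZMod x = 0) :
    ‖x‖ ≤ (p : ℝ) ^ (-1 : ℤ) := by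
  have hmax : x ∈ IsLocalRing.maximalIdeal ℤ_[p] := ker_toZMod (p := p) ▸ hx
  rw [norm_le_pow_iff_norm_lt_pow_add_one]
  simpa using mem_nonunits.mp hmax

theorem norm_natCast_eq_one_of_mem_Icc {i k : ℕ} (hk : k < p) (hi : i ∈ Icc 1 k) :
    ‖(i : ℤ_[p])‖ = 1 := by
  rw [mem_Icc] at hi
  exact norm_natCast_eq_one_iff.mpr <|
    (Nat.Prime.coprime_iff_not_dvd Fact.out).mpr (Nat.not_dvd_of_pos_of_lt hi.1 (by omega))

theorem coe_harmonic {k : ℕ} (hk : k < p) (m : ℕ) :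
    (harmonic p k m : ℚ_[p]) = (harmonic' k m : ℚ_[p]) := by
  simp only [harmonic, harmonic', coe_sum, coe_pow, Rat.cast_sum, Rat.cast_div, Rat.cast_one,
    Rat.cast_pow, Rat.cast_natCast]
  refine sum_congr rfl fun i hi => ?_
  rw [coe_inv_of_norm_eq_one (norm_natCast_eq_one_of_mem_Icc hk hi), coe_natCast, one_div, inv_pow]

theorem toZMod_harmonic {k : ℕ} (hk : k < p) (m : ℕ) :
    toZMod (harmonic p k m) = ZMod.harmonic p k m := by
  simp only [harmonic, ZMod.harmonic, map_sum, map_pow]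
  refine sum_congr rfl fun i hi => ?_
  rw [toZMod_inv_of_norm_eq_one (norm_natCast_eq_one_of_mem_Icc hk hi), map_natCast]

end PadicInt

theorem stmt_14 (r p : ℕ) (hr : 0 < r) [hp : Fact p.Prime] (hpr : 2 * r + 1 < p) :
    ‖((∑ k ∈ Finset.range p, (k : ℚ) ^ r * ((k : ℚ) + 1) ^ r * harmonic' k 2 : ℚ)
      : ℚ_[p])‖ ≤ (p : ℝ) ^ (-1 : ℤ) := by
  have hp3 : 3 < p := by
    have : p ≠ 4 := by rintro rfl; exact absurd hp.out (by decide)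
    omega
  set x : ℤ_[p] :=
    ∑ k ∈ range p, (k : ℤ_[p]) ^ r * ((k : ℤ_[p]) + 1) ^ r * PadicInt.harmonic p k 2
  have hcoe : ((∑ k ∈ range p, (k : ℚ) ^ r * ((k : ℚ) + 1) ^ r * harmonic' k 2 : ℚ) : ℚ_[p])
      = x := by
    simp only [x, PadicInt.coe_sum, PadicInt.coe_mul, PadicInt.coe_pow, PadicInt.coe_add,
      PadicInt.coe_natCast, PadicInt.coe_one]
    push_cast
    exact sum_congr rfl fun k hk => by rw [PadicInt.coe_harmonic (mem_range.mp hk)]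
  have hred : PadicInt.toZMod x = 0 := by
    simp only [x, map_sum, map_mul, map_pow, map_add, map_natCast, map_one]
    rw [sum_congr rfl fun k hk => by rw [PadicInt.toZMod_harmonic (mem_range.mp hk)]]
    exact ZMod.sum_mul_harmonic_eq_zero _ (fun k hk => ZMod.pow_mul_add_one_pow_reflect r hk)
      even_two two_ne_zero (by omega)
  rw [hcoe, ← PadicInt.norm_def]
  exact PadicInt.norm_le_inv_of_toZMod_eq_zero hred
end

section
/- For any prime p > 3, sum_{k=1}^{p-1} H_k/k^2 ≡ B_{p-3} (mod p) and sum_{k=1}^{p-1} H_k^{(2)}/k ≡ -B_{p-3} (mod p), where H_k = sum_{i=1}^k 1/i. -/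
open Finset

theorem Finset.sum_Icc_one_eq_sum_range {M : Type*} [AddCommMonoid M] {f : ℕ → M}
    (hf : f 0 = 0) (n : ℕ) : ∑ i ∈ Icc 1 n, f i = ∑ i ∈ range (n + 1), f i := by
  rw [Nat.range_succ_eq_Icc_zero, ← insert_Icc_add_one_left_eq_Icc n.zero_le,
    sum_insert (by simp), hf, zero_add, zero_add]

theorem FiniteField.sum_pow_eq_sum_pow_units {K : Type*} [Field K] [Fintype K] [DecidableEq K]
    {e : ℕ} (he : e ≠ 0) : ∑ x : K, x ^ e = ∑ x : Kˣ, (x : K) ^ e := by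
  rw [Fintype.sum_eq_add_sum_subtype_ne _ 0, zero_pow he, zero_add]
  exact (Fintype.sum_equiv unitsEquivNeZero _ _ fun _ => rfl).symm

theorem succ_mul_sum_range_pow (n m : ℕ) :
    ((m : ℚ) + 1) * ∑ k ∈ range n, (k : ℚ) ^ m =
      ∑ j ∈ range (m + 1), bernoulli j * (m + 1).choose j * (n : ℚ) ^ (m + 1 - j) := by
  rw [sum_range_pow, mul_sum]
  refine sum_congr rfl fun j _ => ?_
  field_simp

namespace ZMod

theorem natCast_ne_zero_of_dvd {n m k : ℕ} (h : m ∣ k) (hk : (k : ZMod n) ≠ 0) :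
    (m : ZMod n) ≠ 0 := by
  rw [Ne, natCast_eq_zero_iff] at hk ⊢
  exact fun hm => hk (hm.trans h)

theorem natCast_ne_zero_of_pos_of_lt {n i : ℕ} (h0 : 0 < i) (h : i < n) : (i : ZMod n) ≠ 0 := by
  rw [Ne, natCast_eq_zero_iff]
  exact Nat.not_dvd_of_pos_of_lt h0 h

theorem sum_range_eq_sum_univ {n : ℕ} [NeZero n] {M : Type*} [AddCommMonoid M]
    (f : ZMod n → M) : ∑ k ∈ range n, f k = ∑ x : ZMod n, f x := by
  obtain ⟨n, rfl⟩ : ∃ m, n = m + 1 := Nat.exists_eq_add_one.2 (NeZero.pos n)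
  rw [sum_range]
  exact Fintype.sum_equiv (Equiv.refl _) _ _ fun i =>
    congrArg f (natCast_zmod_val (n := n + 1) i)

variable {p : ℕ} [Fact p.Prime]

theorem sum_range_pow {e : ℕ} (he : e ≠ 0) :
    ∑ k ∈ range p, (k : ZMod p) ^ e = if p - 1 ∣ e then -1 else 0 := by
  classical
  rw [sum_range_eq_sum_univ (· ^ e), FiniteField.sum_pow_eq_sum_pow_units he,
    FiniteField.sum_pow_units, card]

theorem sum_range_pow_of_lt_two_mul {e : ℕ} (he : e ≠ 0) (he' : e < 2 * (p - 1)) :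
    ∑ k ∈ range p, (k : ZMod p) ^ e = if e = p - 1 then -1 else 0 := by
  rw [sum_range_pow he]
  exact if_congr ⟨fun h => Nat.eq_of_dvd_of_lt_two_mul he h he', fun h => h ▸ dvd_rfl⟩ rfl rfl

theorem inv_pow_eq_pow_sub {a : ℕ} (ha : 0 < a) (hap : a < p - 1) (x : ZMod p) :
    (x ^ a)⁻¹ = x ^ (p - 1 - a) := by
  rcases eq_or_ne x 0 with rfl | hx
  · rw [zero_pow ha.ne', zero_pow (by omega), inv_zero]
  · refine inv_eq_of_mul_eq_one_left ?_
    rw [← pow_add, Nat.sub_add_cancel hap.le, pow_card_sub_one_eq_one hx]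

theorem natCast_choose_pred {k : ℕ} (hk : k < p) : ((p - 1).choose k : ZMod p) = (-1) ^ k := by
  induction k with
  | zero => simp
  | succ k ih =>
    have hpascal := Nat.choose_succ_succ' (p - 1) k
    rw [Nat.sub_add_cancel (Fact.out : p.Prime).one_le] at hpascal
    have hdvd := (natCast_eq_zero_iff _ p).2
      ((Fact.out : p.Prime).dvd_choose_self k.succ_ne_zero hk)
    rw [hpascal, Nat.cast_add, ih (by omega)] at hdvd
    rw [pow_succ]
    linear_combination hdvd

end ZMod

variable {p : ℕ} [Fact p.Prime]

variable (p) in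
/-- The localization `ℤ_(p)`, as the rationals whose denominator is prime to `p`. On it,
`Rat.cast : ℚ → ZMod p` is reduction modulo `p`; elsewhere it takes the junk value `num / 0 = 0`. -/
def integralAt : Subring ℚ where
  carrier := {x | (x.den : ZMod p) ≠ 0}
  mul_mem' {x y} hx hy :=
    ZMod.natCast_ne_zero_of_dvd (Rat.mul_den_dvd x y) (by push_cast; exact mul_ne_zero hx hy)
  one_mem' := by simp
  add_mem' {x y} hx hy :=
    ZMod.natCast_ne_zero_of_dvd (Rat.add_den_dvd x y) (by push_cast; exact mul_ne_zero hx hy)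
  zero_mem' := by simp
  neg_mem' {x} hx := by simpa using hx

namespace integralAt

theorem mem_iff {x : ℚ} : x ∈ integralAt p ↔ (x.den : ZMod p) ≠ 0 := Iff.rfl

theorem cast_sum {ι : Type*} {s : Finset ι} {f : ι → ℚ} (hf : ∀ i ∈ s, f i ∈ integralAt p) :
    ((∑ i ∈ s, f i : ℚ) : ZMod p) = ∑ i ∈ s, (f i : ZMod p) := by
  classical
  induction s using Finset.induction with
  | empty => simp
  | insert j s hj ih =>
    rw [sum_insert hj, sum_insert hj, Rat.cast_add_of_ne_zero (hf j (mem_insert_self j s))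
      (sum_mem fun i hi => hf i (mem_insert_of_mem hi)),
      ih fun i hi => hf i (mem_insert_of_mem hi)]

theorem inv_natCast_mem {n : ℕ} (hn : (n : ZMod p) ≠ 0) : (n : ℚ)⁻¹ ∈ integralAt p := by
  rw [mem_iff, Rat.inv_natCast_den, if_neg (by rintro rfl; simp at hn)]
  exact hn

theorem div_natCast_pow_mem {x : ℚ} (hx : x ∈ integralAt p) {n : ℕ} (hn : (n : ZMod p) ≠ 0)
    (a : ℕ) : x / (n : ℚ) ^ a ∈ integralAt p := by
  rw [div_eq_mul_inv, ← inv_pow]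
  exact mul_mem hx (pow_mem (inv_natCast_mem hn) a)

theorem cast_div_natCast_pow {x : ℚ} (hx : x ∈ integralAt p) {n : ℕ} (hn : (n : ZMod p) ≠ 0)
    (a : ℕ) : ((x / (n : ℚ) ^ a : ℚ) : ZMod p) = x / (n : ZMod p) ^ a := by
  rw [div_eq_mul_inv, ← inv_pow, Rat.cast_mul_of_ne_zero hx (pow_mem (inv_natCast_mem hn) a),
    Rat.cast_pow, Rat.cast_inv_of_ne_zero (by simpa using hn), Rat.cast_natCast, inv_pow,
    div_eq_mul_inv]

theorem cast_mul_prime_pow_eq_zero {x : ℚ} (hx : x ∈ integralAt p) {e : ℕ} (he : e ≠ 0) :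
    ((x * (p : ℚ) ^ e : ℚ) : ZMod p) = 0 := by
  rw [Rat.cast_mul_of_ne_zero hx (pow_mem (natCast_mem (integralAt p) p) e), Rat.cast_pow,
    Rat.cast_natCast, ZMod.natCast_self, zero_pow he, mul_zero]

theorem div_prime_mem_of_cast_eq_zero {x : ℚ} (hx : x ∈ integralAt p) (h : (x : ZMod p) = 0) :
    x / p ∈ integralAt p := by
  rw [Rat.cast_def, div_eq_zero_iff, or_iff_left (by exact_mod_cast hx),
    ZMod.intCast_zmod_eq_zero_iff_dvd] at h
  obtain ⟨c, hc⟩ := h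
  have hx' : x / p = Rat.divInt c x.den := by
    rw [Rat.divInt_eq_div]
    conv_lhs => rw [← Rat.num_div_den x, hc]
    have hp : (p : ℚ) ≠ 0 := Nat.cast_ne_zero.2 (Fact.out : p.Prime).ne_zero
    push_cast
    field_simp
  rw [mem_iff, hx']
  exact ZMod.natCast_ne_zero_of_dvd (Int.natCast_dvd_natCast.1 (Rat.den_dvd c x.den)) hx

theorem norm_le_one {x : ℚ} (hx : x ∈ integralAt p) : ‖(x : ℚ_[p])‖ ≤ 1 :=
  Padic.norm_rat_le_one (by rwa [mem_iff, Ne, ZMod.natCast_eq_zero_iff] at hx)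

theorem norm_le_inv_of_cast_eq_zero {x : ℚ} (hx : x ∈ integralAt p) (h : (x : ZMod p) = 0) :
    ‖(x : ℚ_[p])‖ ≤ (p : ℝ)⁻¹ := by
  have hp : (p : ℚ) ≠ 0 := Nat.cast_ne_zero.2 (Fact.out : p.Prime).ne_zero
  calc ‖(x : ℚ_[p])‖ = ‖(((p : ℚ) * (x / p) : ℚ) : ℚ_[p])‖ := by rw [mul_div_cancel₀ x hp]
    _ = ‖(p : ℚ_[p])‖ * ‖((x / p : ℚ) : ℚ_[p])‖ := by
        rw [Rat.cast_mul, norm_mul, Rat.cast_natCast]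
    _ ≤ (p : ℝ)⁻¹ * 1 := by
        rw [Padic.norm_p]; gcongr; exact norm_le_one (div_prime_mem_of_cast_eq_zero hx h)
    _ = (p : ℝ)⁻¹ := mul_one _

end integralAt

theorem bernoulli_mem_integralAt {m : ℕ} (hm : m + 2 ≤ p) : bernoulli m ∈ integralAt p := by
  induction m using Nat.strong_induction_on with | _ m ih =>
  rcases Nat.eq_zero_or_pos m with rfl | hm0
  · simp only [bernoulli_zero, one_mem]
  have hB : ∀ j ∈ range m, bernoulli j * (m + 1).choose j ∈ integralAt p := fun j hj =>
    have hjm := mem_range.1 hj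
    mul_mem (ih j hjm (by omega)) (natCast_mem _ _)
  -- Faulhaber's formula at `n = p` with its last term isolated: `y = (m + 1) * bernoulli m * p`,
  -- where every term of `y` is divisible by `p`.
  set y : ℚ := (((m + 1) * ∑ k ∈ range p, k ^ m : ℕ) : ℚ) -
    ∑ j ∈ range m, bernoulli j * (m + 1).choose j * (p : ℚ) ^ (m + 1 - j) with hy
  have hterms : ∀ j ∈ range m,
      bernoulli j * (m + 1).choose j * (p : ℚ) ^ (m + 1 - j) ∈ integralAt p := fun j hj =>
    mul_mem (hB j hj) (pow_mem (natCast_mem _ _) _)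
  have hy_eq : y = ((m : ℚ) + 1) * bernoulli m * p := by
    have := succ_mul_sum_range_pow p m
    rw [sum_range_succ, Nat.choose_succ_self_right, Nat.add_sub_cancel_left, pow_one] at this
    rw [hy]
    push_cast at this ⊢
    linear_combination this
  have hy_mem : y ∈ integralAt p := sub_mem (natCast_mem _ _) (sum_mem hterms)
  have hy_cast : (y : ZMod p) = 0 := by
    rw [hy, Rat.cast_sub_of_ne_zero (natCast_mem (integralAt p) _) (sum_mem hterms),
      integralAt.cast_sum hterms, sum_eq_zero fun j hj =>
        integralAt.cast_mul_prime_pow_eq_zero (hB j hj) (by have := mem_range.1 hj; omega),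
      Rat.cast_natCast]
    push_cast
    rw [ZMod.sum_range_pow hm0.ne', if_neg (Nat.not_dvd_of_pos_of_lt hm0 (by omega)), mul_zero,
      sub_zero]
  have hm1 : ((m + 1 : ℕ) : ZMod p) ≠ 0 := ZMod.natCast_ne_zero_of_pos_of_lt m.succ_pos (by omega)
  have hp : (p : ℚ) ≠ 0 := Nat.cast_ne_zero.2 (Fact.out : p.Prime).ne_zero
  convert integralAt.div_natCast_pow_mem
    (integralAt.div_prime_mem_of_cast_eq_zero hy_mem hy_cast) hm1 1 using 1
  rw [hy_eq]
  push_cast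
  field_simp

theorem ZMod.succ_mul_sum_range_pow {m : ℕ} (hm : m + 2 ≤ p) (n : ℕ) :
    ((m : ZMod p) + 1) * ∑ k ∈ range n, (k : ZMod p) ^ m =
      ∑ j ∈ range (m + 1),
        (bernoulli j : ZMod p) * (m + 1).choose j * (n : ZMod p) ^ (m + 1 - j) := by
  have hB : ∀ j ∈ range (m + 1), bernoulli j ∈ integralAt p := fun j hj =>
    have hjm := mem_range.1 hj
    bernoulli_mem_integralAt (by omega)
  have hterms : ∀ j ∈ range (m + 1), bernoulli j * (m + 1).choose j ∈ integralAt p :=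
    fun j hj => mul_mem (hB j hj) (natCast_mem _ _)
  have h := congrArg (Rat.cast : ℚ → ZMod p) (_root_.succ_mul_sum_range_pow n m)
  have hlhs : ((m : ℚ) + 1) * ∑ k ∈ range n, (k : ℚ) ^ m =
      (((m + 1) * ∑ k ∈ range n, k ^ m : ℕ) : ℚ) := by push_cast; rfl
  rw [hlhs, Rat.cast_natCast, integralAt.cast_sum fun j hj =>
    mul_mem (hterms j hj) (pow_mem (natCast_mem _ _) _)] at h
  push_cast at h
  rw [h]
  refine sum_congr rfl fun j hj => ?_
  rw [Rat.cast_mul_of_ne_zero (hterms j hj) (pow_mem (natCast_mem (integralAt p) _) _),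
    Rat.cast_mul_of_ne_zero (hB j hj) (natCast_mem (integralAt p) _)]
  push_cast
  rfl

theorem ZMod.mul_sum_sum_inv_pow {a b : ℕ} (ha : 0 < a) (hb : 0 < b) (hab : a + b + 2 ≤ p) :
    (a : ZMod p) * ∑ k ∈ Icc 1 (p - 1), (∑ i ∈ Icc 1 k, ((i : ZMod p) ^ a)⁻¹) / (k : ZMod p) ^ b =
      (p - a).choose b * (bernoulli (p - (a + b)) : ZMod p) := by
  set ea := p - 1 - a with hea
  set eb := p - 1 - b with heb
  set S : ℕ → ZMod p := fun k => ∑ i ∈ range k, (i : ZMod p) ^ ea with hS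
  have hsum : ∑ k ∈ Icc 1 (p - 1), (∑ i ∈ Icc 1 k, ((i : ZMod p) ^ a)⁻¹) / (k : ZMod p) ^ b =
      ∑ k ∈ range p, S k * (k : ZMod p) ^ eb + ∑ k ∈ range p, (k : ZMod p) ^ (ea + eb) := by
    have hea0 : ea ≠ 0 := by omega
    have hfermat : ∀ i k : ℕ, ((i : ZMod p) ^ a)⁻¹ / (k : ZMod p) ^ b =
        (i : ZMod p) ^ ea * (k : ZMod p) ^ eb := fun i k => by
      rw [div_eq_mul_inv, inv_pow_eq_pow_sub ha (by omega), inv_pow_eq_pow_sub hb (by omega)]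
    calc _ = ∑ k ∈ Icc 1 (p - 1), ∑ i ∈ range (k + 1), (i : ZMod p) ^ ea * (k : ZMod p) ^ eb := by
          refine sum_congr rfl fun k _ => ?_
          rw [sum_div, ← sum_Icc_one_eq_sum_range (by simp [hea0])]
          exact sum_congr rfl fun i _ => hfermat i k
      _ = ∑ k ∈ range p, ∑ i ∈ range (k + 1), (i : ZMod p) ^ ea * (k : ZMod p) ^ eb := by
          rw [sum_Icc_one_eq_sum_range (by simp [hea0]), Nat.sub_add_cancel (by omega)]
      _ = _ := by simp only [sum_range_succ, add_mul, ← pow_add, sum_add_distrib, ← sum_mul, hS]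
  have hdiag : ∑ k ∈ range p, (k : ZMod p) ^ (ea + eb) = 0 := by
    rw [sum_range_pow_of_lt_two_mul (e := ea + eb) (by omega) (by omega), if_neg (by omega)]
  have hfaulhaber : ((ea : ZMod p) + 1) * ∑ k ∈ range p, S k * (k : ZMod p) ^ eb =
      ∑ j ∈ range (ea + 1), (bernoulli j : ZMod p) * (ea + 1).choose j *
        ∑ k ∈ range p, (k : ZMod p) ^ (ea + 1 - j + eb) := by
    simp_rw [mul_sum, ← mul_assoc, hS, succ_mul_sum_range_pow (by omega : ea + 2 ≤ p), sum_mul]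
    rw [sum_comm]
    exact sum_congr rfl fun j _ => sum_congr rfl fun k _ => by ring
  have hpowsum : ∀ j ∈ range (ea + 1), ∑ k ∈ range p, (k : ZMod p) ^ (ea + 1 - j + eb) =
      if j = p - (a + b) then -1 else 0 := fun j hj => by
    have := mem_range.1 hj
    rw [sum_range_pow_of_lt_two_mul (e := ea + 1 - j + eb) (by omega) (by omega)]
    exact if_congr (by omega) rfl rfl
  have hea1 : (ea : ZMod p) + 1 = -a := by
    have h := congrArg (Nat.cast : ℕ → ZMod p) (show ea + 1 + a = p by omega)
    push_cast at h
    rw [natCast_self] at h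
    linear_combination h
  have hchoose : (ea + 1).choose (p - (a + b)) = (p - a).choose b := by
    rw [show ea + 1 = p - a by omega]
    exact Nat.choose_symm_of_eq_add (by omega)
  rw [← neg_inj, ← neg_mul, ← hea1, hsum, hdiag, add_zero, hfaulhaber,
    sum_congr rfl fun j hj => by rw [hpowsum j hj]]
  simp only [mul_ite, mul_neg, mul_one, mul_zero, sum_ite_eq', mem_range, hchoose,
    if_pos (show p - (a + b) < ea + 1 by omega)]
  ring

theorem harmonic'_mem_integralAt {k : ℕ} (hk : k < p) (m : ℕ) : harmonic' k m ∈ integralAt p :=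
  sum_mem fun i hi => have := mem_Icc.1 hi
    integralAt.div_natCast_pow_mem (one_mem _)
      (ZMod.natCast_ne_zero_of_pos_of_lt (by omega) (by omega)) m

theorem cast_harmonic' {k : ℕ} (hk : k < p) (m : ℕ) :
    (harmonic' k m : ZMod p) = ∑ i ∈ Icc 1 k, ((i : ZMod p) ^ m)⁻¹ := by
  have hne : ∀ i ∈ Icc 1 k, (i : ZMod p) ≠ 0 := fun i hi => have := mem_Icc.1 hi
    ZMod.natCast_ne_zero_of_pos_of_lt (by omega) (by omega)
  rw [harmonic', integralAt.cast_sum fun i hi =>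
    integralAt.div_natCast_pow_mem (one_mem _) (hne i hi) m]
  refine sum_congr rfl fun i hi => ?_
  rw [integralAt.cast_div_natCast_pow (one_mem _) (hne i hi), Rat.cast_one, one_div]

theorem norm_sum_harmonic'_div_pow_sub_le {a b : ℕ} (ha : 0 < a) (hb : 0 < b)
    (hab : a + b + 2 ≤ p) (c : ℤ) (hc : (a : ZMod p) * c = (p - a).choose b) :
    ‖((∑ k ∈ Icc 1 (p - 1), harmonic' k a / (k : ℚ) ^ b - c * bernoulli (p - (a + b)) : ℚ) :
      ℚ_[p])‖ ≤ (p : ℝ)⁻¹ := by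
  have hk : ∀ k ∈ Icc 1 (p - 1), k < p ∧ (k : ZMod p) ≠ 0 := fun k hk => have := mem_Icc.1 hk
    ⟨by omega, ZMod.natCast_ne_zero_of_pos_of_lt (by omega) (by omega)⟩
  have hterms : ∀ k ∈ Icc 1 (p - 1), harmonic' k a / (k : ℚ) ^ b ∈ integralAt p := fun k hk' =>
    integralAt.div_natCast_pow_mem (harmonic'_mem_integralAt (hk k hk').1 a) (hk k hk').2 b
  have hB := bernoulli_mem_integralAt (p := p) (m := p - (a + b)) (by omega)
  have hcB : (c : ℚ) * bernoulli (p - (a + b)) ∈ integralAt p := mul_mem (intCast_mem _ c) hB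
  refine integralAt.norm_le_inv_of_cast_eq_zero (sub_mem (sum_mem hterms) hcB) ?_
  rw [Rat.cast_sub_of_ne_zero (sum_mem hterms) hcB, integralAt.cast_sum hterms,
    Rat.cast_mul_of_ne_zero (intCast_mem (integralAt p) c) hB, Rat.cast_intCast, sub_eq_zero,
    sum_congr rfl fun k hk' => by
      rw [integralAt.cast_div_natCast_pow (harmonic'_mem_integralAt (hk k hk').1 a) (hk k hk').2,
        cast_harmonic' (hk k hk').1]]
  refine mul_left_cancel₀ (ZMod.natCast_ne_zero_of_pos_of_lt ha (by omega)) ?_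
  rw [ZMod.mul_sum_sum_inv_pow ha hb hab, ← mul_assoc, hc]

theorem stmt_18 (p : ℕ) [hp : Fact p.Prime] (hp3 : 3 < p) :
    ‖((∑ k ∈ Finset.Icc 1 (p - 1), harmonic' k 1 / (k : ℚ) ^ 2
        - bernoulli (p - 3) : ℚ) : ℚ_[p])‖ ≤ (p : ℝ) ^ (-1 : ℤ) ∧
    ‖((∑ k ∈ Finset.Icc 1 (p - 1), harmonic' k 2 / (k : ℚ)
        - (-(bernoulli (p - 3))) : ℚ) : ℚ_[p])‖ ≤ (p : ℝ) ^ (-1 : ℤ) := by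
  have hp5 : 5 ≤ p := by
    have : p ≠ 4 := by rintro rfl; exact absurd hp.out (by norm_num)
    omega
  rw [zpow_neg_one]
  constructor
  · have h := norm_sum_harmonic'_div_pow_sub_le (p := p) one_pos two_pos (by omega) 1
      (by rw [ZMod.natCast_choose_pred (by omega)]; norm_num)
    simpa using h
  · have h := norm_sum_harmonic'_div_pow_sub_le (p := p) two_pos one_pos (by omega) (-1)
      (by rw [Nat.choose_one_right, Nat.cast_sub (by omega), ZMod.natCast_self]; norm_num)
    simpa using h
end
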